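/- arXiv:2010.07057 — 2 statements merged into one kernel-verified Lean document; each statement's English description precedes it below -/
import Mathlib

section
/- Let v : Fin m → α be a vector, b' : Fin m → Prop a boolean vector, and q : α → Prop a predicate. Then selecting additionally by the pointwise evaluation of q on v equals filtering the choice set by q: choice(v, fun i => q (v i) ∧ b' i) = {x ∈ choice(v, b') | q x}. -/
/-- The choice function: the set of entries of `v` selected by the boolean vector `b`. -/
def choice {α : Type*} {m : ℕ} (v : Fin m → α) (b : Fin m → Prop) : Set α :=
  {x | ∃ i : Fin m, b i ∧ v i = x}

theorem choice_eq_image {α : Type*} {m : ℕ} (v : Fin m → α) (b : Fin m → Prop) :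
    choice v b = v '' {i | b i} :=
  rfl

theorem choice_filter {α : Type*} {m : ℕ} (v : Fin m → α) (b' : Fin m → Prop)
    (q : α → Prop) :
    choice v (fun i => q (v i) ∧ b' i) = {x ∈ choice v b' | q x} :=
  calc choice v (fun i => q (v i) ∧ b' i) = v '' (v ⁻¹' {x | q x} ∩ {i | b' i}) :=
        choice_eq_image v _
    _ = {x | q x} ∩ v '' {i | b' i} := Set.image_preimage_inter v _ _
    _ = {x ∈ choice v b' | q x} := Set.inter_comm _ _
end

section
/- Let b, b' : Fin n → Bool be two boolean vectors containing the same number of true entries, i.e. the cardinality of {i | b i = true} equals the cardinality of {i | b' i = true}. Then the distributions of the uniformly shuffled vectors coincide: PMF.map (fun σ => b ∘ σ) (PMF.uniformOfFintype (Equiv.Perm (Fin n))) = PMF.map (fun σ => b' ∘ σ) (PMF.uniformOfFintype (Equiv.Perm (Fin n))). -/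
/-!
Two boolean vectors with the same number of `true` entries have fibres of equal size over both
values, so one is a permutation `b' = b ∘ τ` of the other. Precomposing the uniform permutation
`σ` with `τ` is a bijection of `Equiv.Perm (Fin n)`, which leaves the uniform distribution
unchanged.
-/

open Finset

theorem PMF.map_equiv_uniformOfFintype {α β : Type*} [Fintype α] [Fintype β] [Nonempty α]
    [Nonempty β] (e : α ≃ β) :
    (PMF.uniformOfFintype α).map e = PMF.uniformOfFintype β := by
  ext b
  rw [PMF.map_apply, tsum_eq_single (e.symm b) fun a ha => if_neg fun hb => ha (by simp [hb])]
  simp [Fintype.card_congr e]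

theorem PMF.map_comp_perm_uniformOfFintype {α β : Type*} [Fintype α] [DecidableEq α]
    (f : α → β) (τ : Equiv.Perm α) :
    (PMF.uniformOfFintype (Equiv.Perm α)).map (fun σ : Equiv.Perm α => (f ∘ τ) ∘ σ) =
      (PMF.uniformOfFintype (Equiv.Perm α)).map (fun σ : Equiv.Perm α => f ∘ σ) := by
  have : (fun σ : Equiv.Perm α => (f ∘ τ) ∘ σ) =
      (fun σ : Equiv.Perm α => f ∘ σ) ∘ Equiv.mulLeft τ := rfl
  rw [this, ← PMF.map_comp, PMF.map_equiv_uniformOfFintype]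

theorem exists_perm_comp_eq_of_card_fiber_eq {α γ : Type*} [Fintype α] [DecidableEq γ]
    {f g : α → γ} (h : ∀ c, #{a | f a = c} = #{a | g a = c}) :
    ∃ τ : Equiv.Perm α, f ∘ τ = g := by
  have e : ∀ c, {a // g a = c} ≃ {a // f a = c} := fun c =>
    Fintype.equivOfCardEq (by simp only [Fintype.card_subtype, h])
  exact ⟨Equiv.ofFiberEquiv e, funext (Equiv.ofFiberEquiv_map e)⟩

theorem card_fiber_eq_of_card_true_eq {α : Type*} [Fintype α] {b b' : α → Bool}
    (h : #{a | b a = true} = #{a | b' a = true}) (c : Bool) :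
    #{a | b a = c} = #{a | b' a = c} := by
  cases c
  case true => exact h
  case false =>
    have hb := card_filter_add_card_filter_not (s := univ) (fun a => b a = true)
    have hb' := card_filter_add_card_filter_not (s := univ) (fun a => b' a = true)
    simp only [Bool.not_eq_true] at hb hb'
    omega

theorem shuffle_bits_invariant {n : ℕ} (b b' : Fin n → Bool)
    (h : (Finset.univ.filter fun i => b i = true).card =
         (Finset.univ.filter fun i => b' i = true).card) :
    PMF.map (fun σ : Equiv.Perm (Fin n) => b ∘ σ)
        (PMF.uniformOfFintype (Equiv.Perm (Fin n))) =
      PMF.map (fun σ : Equiv.Perm (Fin n) => b' ∘ σ)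
        (PMF.uniformOfFintype (Equiv.Perm (Fin n))) := by
  obtain ⟨τ, rfl⟩ := exists_perm_comp_eq_of_card_fiber_eq (card_fiber_eq_of_card_true_eq h)
  exact (PMF.map_comp_perm_uniformOfFintype b τ).symm
end
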